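/- arXiv:1511.01386 — 4 statements merged into one kernel-verified Lean document; each statement's English description precedes it below -/
import Mathlib

section
/- Let W be a Coxeter group, J ⊆ S, δ a twisting automorphism, and 𝒪 a δ-twisted W_J-conjugacy class in W for which the Red-Min property holds (from every element of 𝒪 there is a length-weakly-decreasing sequence of twisted conjugations by simple reflections in J reaching a minimal length element). Then the set of minimal length elements of 𝒪 coincides with the set of minimal elements of 𝒪 with respect to the Bruhat order. -/
/-!
If `x ≤ w` in the Bruhat order and `ℓ w ≤ ℓ x`, then `x = w`; hence minimal length elements of
`𝒪` are Bruhat-minimal. Conversely, follow a Red-Min chain from a Bruhat-minimal `w`. Each step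
is `w ↦ s w s'` with `s` and `s' = δ(s)⁻¹` simple. It cannot shorten `w`, because a shorter
`s w s'` lies Bruhat-below `w`. A length-preserving step keeps Bruhat-minimality, because then
`x ≤ s w s'` forces `x ≤ w` or `s x s' ≤ w` (lifting property, and `s w s' = w` by the exchange
condition when `s` and `s'` are both ascents of `w`). So the chain never changes the length and
ends at a minimal length element.

The Bruhat order facts come from the subword property, whose engine is the strong exchange
condition, proved with the sign-twisted action of `W` on `W × ℤ/2` from Humphreys' proof.
-/

open CoxeterSystem

variable {B : Type*} {W : Type*} [Group W] {M : CoxeterMatrix B}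

/-- The Bruhat order on a Coxeter group: `x ≤ w` iff `x` is the product of a subword of
some reduced word for `w`. -/
def BruhatLE (cs : CoxeterSystem M W) (x w : W) : Prop :=
  ∃ ω : List B, cs.IsReduced ω ∧ cs.wordProd ω = w ∧
    ∃ ω' : List B, ω'.Sublist ω ∧ cs.wordProd ω' = x

/-- One step of length-nonincreasing `δ`-twisted conjugation by a simple reflection in `J`. -/
def TwistedStep (cs : CoxeterSystem M W) (J : Set B) (δ : W →* W) (w w' : W) : Prop :=
  ∃ i ∈ J, w' = cs.simple i * w * (δ (cs.simple i))⁻¹ ∧ cs.length w' ≤ cs.length w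

namespace CoxeterSystem

variable (cs : CoxeterSystem M W)

local prefix:100 "s" => cs.simple
local prefix:100 "π" => cs.wordProd
local prefix:100 "ℓ" => cs.length
local prefix:100 "ris" => cs.rightInvSeq

section InversionParity

variable [DecidableEq W]

def reflectionParityPerm (i : B) : Equiv.Perm (W × ZMod 2) :=
  Equiv.prodShear (MulAut.conj (s i)).toEquiv fun t => Equiv.addRight (if t = s i then 1 else 0)

theorem reflectionParityPerm_apply (i : B) (t : W) (e : ZMod 2) :
    cs.reflectionParityPerm i (t, e) = (s i * t * (s i)⁻¹, e + if t = s i then 1 else 0) :=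
  rfl

theorem reflectionParityPerm_mul_pow_apply (i i' : B) (k : ℕ) (t : W) (e : ZMod 2) :
    ((cs.reflectionParityPerm i * cs.reflectionParityPerm i') ^ k) (t, e) =
      ((s i * s i') ^ k * t * ((s i * s i') ^ k)⁻¹,
        e + ∑ j ∈ Finset.range (2 * k), if t = (s i' * s i) ^ j * s i' then 1 else 0) := by
  induction k generalizing t e with
  | zero => simp
  | succ k ih =>
    have hconj (j : ℕ) : s i * (s i' * t * (s i')⁻¹) * (s i)⁻¹ = (s i' * s i) ^ j * s i' ↔
        t = (s i' * s i) ^ (j + 2) * s i' := by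
      have key : s i * (s i' * ((s i' * s i) ^ (j + 2) * s i') * (s i')⁻¹) * (s i)⁻¹ =
          (s i' * s i) ^ j * s i' := by
        rw [pow_succ, pow_succ']
        simp [mul_assoc, inv_simple]
      rw [← key, mul_left_inj, mul_right_inj, mul_left_inj, mul_right_inj]
    have hfirst : s i' * t * (s i')⁻¹ = s i ↔ t = (s i' * s i) ^ 1 * s i' := by
      rw [mul_inv_eq_iff_eq_mul, pow_one, mul_assoc, ← inv_simple, inv_mul_eq_iff_eq_mul,
        inv_simple]
    rw [pow_succ, Equiv.Perm.mul_apply, Equiv.Perm.mul_apply, reflectionParityPerm_apply,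
      reflectionParityPerm_apply, ih]
    simp only [hconj, hfirst, mul_add, mul_one, Finset.sum_range_succ' _ (2 * k + 1),
      Finset.sum_range_succ' _ (2 * k), pow_zero, one_mul, zero_add]
    refine Prod.ext ?_ ?_
    · simp only [pow_succ, mul_inv_rev, mul_assoc]
    · ring

theorem isLiftable_reflectionParityPerm : M.IsLiftable cs.reflectionParityPerm := by
  intro i i'
  ext ⟨t, e⟩ : 1
  -- the reflections `(s i' * s i) ^ j * s i'` repeat with period `M i i'`, so every `t` is
  -- counted an even number of times
  rw [reflectionParityPerm_mul_pow_apply, simple_mul_simple_pow, two_mul, Finset.sum_range_add]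
  simp [pow_add, CharTwo.add_self_eq_zero]

def reflectionParityRep : W →* Equiv.Perm (W × ZMod 2) :=
  cs.lift ⟨_, cs.isLiftable_reflectionParityPerm⟩

theorem reflectionParityRep_wordProd_apply (ω : List B) (t : W) (e : ZMod 2) :
    cs.reflectionParityRep (π ω) (t, e) = (π ω * t * (π ω)⁻¹, e + (ris ω).count t) := by
  induction ω generalizing t e with
  | nil => simp
  | cons i ω ih =>
    rw [wordProd_cons, map_mul, Equiv.Perm.mul_apply, ih, reflectionParityRep,
      lift_apply_simple, reflectionParityPerm_apply]
    have hcond : π ω * t * (π ω)⁻¹ = s i ↔ (π ω)⁻¹ * s i * π ω = t := by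
      rw [eq_comm, ← mul_inv_eq_iff_eq_mul, ← inv_mul_eq_iff_eq_mul, inv_inv, mul_assoc]
    refine Prod.ext ?_ ?_
    · simp only [mul_inv_rev, mul_assoc]
    · simp only [rightInvSeq, List.count_cons, beq_iff_eq, hcond, Nat.cast_add, Nat.cast_ite,
        Nat.cast_one, Nat.cast_zero, add_assoc]

-- Equal to `1` exactly when `t` is a right inversion of `w`.
def inversionParity (w t : W) : ZMod 2 := (cs.reflectionParityRep w (t, 0)).2

theorem reflectionParityRep_apply (w t : W) (e : ZMod 2) :
    cs.reflectionParityRep w (t, e) = (w * t * w⁻¹, e + cs.inversionParity w t) := by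
  obtain ⟨ω, -, rfl⟩ := cs.exists_isReduced w
  simp [inversionParity, reflectionParityRep_wordProd_apply]

theorem inversionParity_mul (u v t : W) :
    cs.inversionParity (u * v) t = cs.inversionParity v t + cs.inversionParity u (v * t * v⁻¹) := by
  have h : cs.reflectionParityRep (u * v) (t, 0) =
      cs.reflectionParityRep u (cs.reflectionParityRep v (t, 0)) := by
    rw [map_mul, Equiv.Perm.mul_apply]
  rw [reflectionParityRep_apply, reflectionParityRep_apply, reflectionParityRep_apply] at h
  simpa using congrArg Prod.snd h

theorem inversionParity_one (t : W) : cs.inversionParity 1 t = 0 := by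
  simp [inversionParity]

theorem inversionParity_simple_self (i : B) : cs.inversionParity (s i) (s i) = 1 := by
  simp [inversionParity, reflectionParityRep, lift_apply_simple, reflectionParityPerm_apply]

theorem inversionParity_self {t : W} (ht : cs.IsReflection t) : cs.inversionParity t t = 1 := by
  obtain ⟨v, i, rfl⟩ := ht
  -- writing `η` for `inversionParity` and `t = v s v⁻¹`: `η(t, t) = η(v⁻¹, t) + η(s, s) + η(v, s)`,
  -- and `η(v⁻¹, t) = η(v, s)` because `η(v⁻¹ v, s) = 0`
  have h1 := cs.inversionParity_mul (v * s i) v⁻¹ (v * s i * v⁻¹)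
  have h2 := cs.inversionParity_mul v (s i) (s i)
  have h3 := cs.inversionParity_mul v⁻¹ v (s i)
  simp only [mul_inv_cancel, inv_mul_cancel, mul_one, inv_mul_cancel_left, inversionParity_one,
    mul_assoc] at h1 h2 h3
  rw [mul_assoc, h1, h2, inversionParity_simple_self, ← CharTwo.add_eq_zero.mp h3.symm,
    add_left_comm, CharTwo.add_self_eq_zero, add_zero]

theorem mem_rightInvSeq_of_inversionParity_eq_one {ω : List B} {t : W}
    (h : cs.inversionParity (π ω) t = 1) : t ∈ ris ω := by
  have h' := congrArg Prod.snd (cs.reflectionParityRep_wordProd_apply ω t 0)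
  rw [reflectionParityRep_apply, h] at h'
  by_contra ht
  simp [List.count_eq_zero_of_not_mem ht] at h'

theorem inversionParity_eq_one_of_isRightInversion {w t : W} (ht : cs.IsRightInversion w t) :
    cs.inversionParity w t = 1 := by
  -- otherwise `t` would be a right inversion of `w * t` as well as of `w`
  obtain ⟨κ, hκred, hκ⟩ := cs.exists_isReduced (w * t)
  by_contra hne
  have h0 : cs.inversionParity w t = 0 := by
    generalize cs.inversionParity w t = x at hne
    revert x
    decide
  have hwt : cs.inversionParity (π κ) t = 1 := by
    rw [← hκ, inversionParity_mul, ht.1.mul_self, one_mul, ht.1.inv, cs.inversionParity_self ht.1,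
      h0, add_zero]
  have := cs.isRightInversion_of_mem_rightInvSeq hκred
    (cs.mem_rightInvSeq_of_inversionParity_eq_one hwt)
  rw [← hκ] at this
  exact (ht.1.isRightInversion_mul_left_iff.mp this) ht

end InversionParity

theorem mem_rightInvSeq_of_isRightInversion {ω : List B} {t : W}
    (ht : cs.IsRightInversion (π ω) t) : t ∈ ris ω := by
  classical
  exact cs.mem_rightInvSeq_of_inversionParity_eq_one
    (cs.inversionParity_eq_one_of_isRightInversion ht)

theorem exists_wordProd_eraseIdx_eq_mul {ω : List B} {t : W}
    (ht : cs.IsRightInversion (π ω) t) : ∃ j < ω.length, π (ω.eraseIdx j) = π ω * t := by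
  obtain ⟨j, hj, rfl⟩ := List.mem_iff_getElem.mp (cs.mem_rightInvSeq_of_isRightInversion ht)
  rw [length_rightInvSeq] at hj
  refine ⟨j, hj, ?_⟩
  rw [← wordProd_mul_getD_rightInvSeq, List.getD_eq_getElem]

variable {cs} in
theorem IsReduced.cons {ρ : List B} (hρ : cs.IsReduced ρ) {i : B}
    (hi : ℓ (π ρ) < ℓ (s i * π ρ)) : cs.IsReduced (i :: ρ) := by
  have := cs.length_simple_mul (π ρ) i
  have : ℓ (π ρ) = ρ.length := hρ
  show ℓ (π (i :: ρ)) = ρ.length + 1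
  rw [wordProd_cons]
  omega

variable {cs} in
theorem IsReduced.concat {ρ : List B} (hρ : cs.IsReduced ρ) {i : B}
    (hi : ℓ (π ρ) < ℓ (π ρ * s i)) : cs.IsReduced (ρ ++ [i]) := by
  have := cs.length_mul_simple (π ρ) i
  have : ℓ (π ρ) = ρ.length := hρ
  show ℓ (π (ρ ++ [i])) = (ρ ++ [i]).length
  rw [wordProd_append, wordProd_singleton, List.length_append, List.length_singleton]
  omega

theorem exists_isReduced_sublist (ω : List B) :
    ∃ τ, τ.Sublist ω ∧ cs.IsReduced τ ∧ π τ = π ω := by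
  induction ω using List.reverseRecOn with
  | nil => exact ⟨[], List.Sublist.refl _, by simp [IsReduced], rfl⟩
  | append_singleton ω i ih =>
    obtain ⟨τ, hτω, hτ, hτπ⟩ := ih
    have hπ : π (ω ++ [i]) = π τ * s i := by rw [wordProd_append, wordProd_singleton, hτπ]
    rcases lt_or_gt_of_ne (cs.length_mul_simple_ne (π τ) i) with hdesc | hasc
    · obtain ⟨j, hj, hjπ⟩ :=
        cs.exists_wordProd_eraseIdx_eq_mul ⟨cs.isReflection_simple i, hdesc⟩
      refine ⟨τ.eraseIdx j, ((τ.eraseIdx_sublist j).trans hτω).trans (List.sublist_append_left _ _),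
        ?_, hjπ.trans hπ.symm⟩
      have := List.length_eraseIdx_add_one hj
      have := cs.length_mul_simple (π τ) i
      have : ℓ (π τ) = τ.length := hτ
      show ℓ (π (τ.eraseIdx j)) = _
      rw [hjπ]
      omega
    · exact ⟨τ ++ [i], hτω.append (List.Sublist.refl _), hτ.concat hasc,
        by rw [wordProd_append, wordProd_singleton, hπ]⟩

theorem simple_mul_mul_eq_or_length_mul_lt {w t : W} {i : B}
    (ht : cs.IsRightInversion (s i * w) t) : s i * w * t = w ∨ ℓ (w * t) < ℓ w := by
  obtain ⟨ρ, hρ, rfl⟩ := cs.exists_isReduced w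
  rw [← wordProd_cons] at ht
  obtain ⟨j, hj, hjπ⟩ := cs.exists_wordProd_eraseIdx_eq_mul ht
  rw [wordProd_cons] at hjπ
  cases j with
  | zero => exact Or.inl hjπ.symm
  | succ j =>
    right
    rw [List.eraseIdx_cons_succ, wordProd_cons, mul_assoc, mul_right_inj] at hjπ
    have := List.length_eraseIdx_add_one (Nat.lt_of_succ_lt_succ hj)
    have := cs.length_wordProd_le (ρ.eraseIdx j)
    have : ℓ (π ρ) = ρ.length := hρ
    rw [← hjπ]
    omega

variable {cs}

open Relation

def BruhatStep (x y : W) : Prop := ∃ t, cs.IsRightInversion y t ∧ y * t = x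

theorem bruhatStep_self_simple_mul {y : W} {i : B} (h : ℓ y < ℓ (s i * y)) :
    cs.BruhatStep y (s i * y) :=
  ⟨y⁻¹ * s i * y, ⟨by simpa using (cs.isReflection_simple i).conj y⁻¹, by simpa [mul_assoc]⟩,
    by simp [mul_assoc]⟩

theorem exists_isReduced_sublist_of_reflTransGen {x w : W}
    (h : ReflTransGen cs.BruhatStep x w) {ω : List B} (hω : cs.IsReduced ω) (hw : π ω = w) :
    ∃ σ, σ.Sublist ω ∧ cs.IsReduced σ ∧ π σ = x := by
  induction h generalizing ω with
  | refl => exact ⟨ω, List.Sublist.refl _, hω, hw⟩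
  | tail _ hstep ih =>
    obtain ⟨t, ht, rfl⟩ := hstep
    obtain ⟨j, -, hj⟩ := cs.exists_wordProd_eraseIdx_eq_mul (hw ▸ ht)
    obtain ⟨τ, hτ, hτred, hτπ⟩ := cs.exists_isReduced_sublist (ω.eraseIdx j)
    obtain ⟨σ, hσ, hσred, hσπ⟩ := ih hτred (by rw [hτπ, hj, hw])
    exact ⟨σ, hσ.trans (hτ.trans (ω.eraseIdx_sublist j)), hσred, hσπ⟩

theorem BruhatStep.simple_mul {y w : W} (h : cs.BruhatStep y w) (i : B) :
    ReflTransGen cs.BruhatStep (s i * y) w ∨ ReflTransGen cs.BruhatStep (s i * y) (s i * w) := by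
  obtain ⟨t, ⟨ht, hlt⟩, rfl⟩ := h
  rcases lt_or_gt_of_ne (ht.length_mul_left_ne (s i * w)) with hdesc | hasc
  · exact Or.inr (.single ⟨t, ⟨ht, hdesc⟩, by rw [mul_assoc]⟩)
  · have hinv : cs.IsRightInversion (s i * (w * t)) t := by
      refine ⟨ht, ?_⟩
      rwa [← mul_assoc, mul_assoc, ht.mul_self, mul_one]
    rcases cs.simple_mul_mul_eq_or_length_mul_lt hinv with heq | hlt'
    · left
      rw [← heq, mul_assoc, mul_assoc, ht.mul_self, mul_one, simple_mul_simple_cancel_left]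
    · rw [mul_assoc, ht.mul_self, mul_one] at hlt'
      omega

-- Deodhar's property Z.
theorem reflTransGen_bruhatStep_simple_mul {y w : W} (h : ReflTransGen cs.BruhatStep y w) (i : B) :
    ReflTransGen cs.BruhatStep (s i * y) w ∨ ReflTransGen cs.BruhatStep (s i * y) (s i * w) := by
  induction h with
  | refl => exact Or.inr .refl
  | tail _ hstep ih =>
    rcases ih with h | h
    · exact Or.inl (h.tail hstep)
    · rcases hstep.simple_mul i with h' | h'
      · exact Or.inl (h.trans h')
      · exact Or.inr (h.trans h')

theorem reflTransGen_wordProd_of_sublist {ω σ : List B} (hω : cs.IsReduced ω)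
    (hσ : σ.Sublist ω) : ReflTransGen cs.BruhatStep (π σ) (π ω) := by
  induction ω generalizing σ with
  | nil => rw [List.sublist_nil.mp hσ]
  | cons i ρ ih =>
    have hρ : cs.IsReduced ρ := by simpa using hω.drop 1
    have hasc : ℓ (π ρ) < ℓ (s i * π ρ) := by
      have h1 : ℓ (s i * π ρ) = ρ.length + 1 := by rw [← wordProd_cons]; exact hω
      have h2 : ℓ (π ρ) = ρ.length := hρ
      omega
    have hstep := bruhatStep_self_simple_mul hasc
    rw [wordProd_cons]
    rcases List.sublist_cons_iff.mp hσ with hσ | ⟨σ₀, rfl, hσ₀⟩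
    · exact (ih hρ hσ).tail hstep
    · rw [wordProd_cons]
      rcases reflTransGen_bruhatStep_simple_mul (ih hρ hσ₀) i with h | h
      · exact h.tail hstep
      · exact h

theorem simple_mul_mul_simple_eq_self {w : W} {i i' : B} (hi : ℓ w < ℓ (s i * w))
    (hi' : ℓ w < ℓ (w * s i')) (hlen : ℓ (s i * w * s i') = ℓ w) : s i * w * s i' = w := by
  have hinv : cs.IsRightInversion (s i * w) (s i') := ⟨cs.isReflection_simple i', by omega⟩
  exact (cs.simple_mul_mul_eq_or_length_mul_lt hinv).resolve_right (by omega)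

end CoxeterSystem

section BruhatOrder

variable {cs : CoxeterSystem M W} {𝒪 : Set W}

local prefix:100 "s" => cs.simple
local prefix:100 "π" => cs.wordProd
local prefix:100 "ℓ" => cs.length

namespace BruhatLE

theorem reflTransGen_bruhatStep {x w : W} (h : BruhatLE cs x w) :
    Relation.ReflTransGen cs.BruhatStep x w := by
  obtain ⟨ω, hω, rfl, σ, hσ, rfl⟩ := h
  exact reflTransGen_wordProd_of_sublist hω hσ

theorem exists_sublist {x w : W} (h : BruhatLE cs x w) {ω : List B} (hω : cs.IsReduced ω)
    (hw : π ω = w) : ∃ σ, σ.Sublist ω ∧ π σ = x := by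
  obtain ⟨σ, hσ, -, hσπ⟩ :=
    exists_isReduced_sublist_of_reflTransGen h.reflTransGen_bruhatStep hω hw
  exact ⟨σ, hσ, hσπ⟩

theorem eq_of_length_le {x w : W} (h : BruhatLE cs x w) (hl : ℓ w ≤ ℓ x) : x = w := by
  obtain ⟨ω, hω, rfl, σ, hσ, rfl⟩ := h
  have := cs.length_wordProd_le σ
  have : ℓ (π ω) = ω.length := hω
  rw [hσ.eq_of_length (by have := hσ.length_le; omega)]

theorem inv {x w : W} (h : BruhatLE cs x w) : BruhatLE cs x⁻¹ w⁻¹ := by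
  obtain ⟨ω, hω, rfl, σ, hσ, rfl⟩ := h
  exact ⟨ω.reverse, hω.reverse, wordProd_reverse cs ω, σ.reverse, hσ.reverse,
    wordProd_reverse cs σ⟩

theorem mul_simple {y v : W} (h : BruhatLE cs y v) {i : B} (hv : ℓ v < ℓ (v * s i)) :
    BruhatLE cs (y * s i) (v * s i) := by
  obtain ⟨ω, hω, rfl, σ, hσ, rfl⟩ := h
  exact ⟨ω ++ [i], hω.concat hv, by simp [wordProd_append], σ ++ [i],
    hσ.append (List.Sublist.refl _), by simp [wordProd_append]⟩

theorem le_mul_simple {y v : W} (h : BruhatLE cs y v) {i : B} (hv : ℓ v < ℓ (v * s i)) :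
    BruhatLE cs y (v * s i) := by
  obtain ⟨ω, hω, rfl, σ, hσ, rfl⟩ := h
  exact ⟨ω ++ [i], hω.concat hv, by simp [wordProd_append], σ,
    hσ.trans (List.sublist_append_left _ _), rfl⟩

-- A weak form of the lifting property (Björner–Brenti, Prop. 2.2.7).
theorem le_simple_mul_or_simple_mul_le {x w : W} (h : BruhatLE cs x w) {i : B}
    (hw : ℓ (s i * w) < ℓ w) : BruhatLE cs x (s i * w) ∨ BruhatLE cs (s i * x) (s i * w) := by
  obtain ⟨ρ, hρ, hρπ⟩ := cs.exists_isReduced (s i * w)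
  have hiρ : cs.IsReduced (i :: ρ) :=
    hρ.cons (by rwa [← hρπ, simple_mul_simple_cancel_left])
  obtain ⟨σ, hσ, rfl⟩ :=
    h.exists_sublist hiρ (by rw [wordProd_cons, ← hρπ, simple_mul_simple_cancel_left])
  rcases List.sublist_cons_iff.mp hσ with hσ | ⟨σ₀, rfl, hσ₀⟩
  · exact Or.inl ⟨ρ, hρ, hρπ.symm, σ, hσ, rfl⟩
  · exact Or.inr ⟨ρ, hρ, hρπ.symm, σ₀, hσ₀, by rw [wordProd_cons, simple_mul_simple_cancel_left]⟩

theorem le_or_simple_mul_mul_simple_le_of_length_simple_mul_lt {x w : W} (h : BruhatLE cs x w)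
    {i i' : B} (hlen : ℓ (s i * w * s i') = ℓ w) (hw : ℓ (s i * w) < ℓ w) :
    BruhatLE cs x (s i * w * s i') ∨ BruhatLE cs (s i * x * s i') (s i * w * s i') := by
  have hasc : ℓ (s i * w) < ℓ (s i * w * s i') := by
    have := cs.length_simple_mul w i
    omega
  rcases h.le_simple_mul_or_simple_mul_le hw with h | h
  · exact Or.inl (h.le_mul_simple hasc)
  · exact Or.inr (h.mul_simple hasc)

theorem le_or_simple_mul_mul_simple_le {x w : W} (h : BruhatLE cs x w) {i i' : B}
    (hlen : ℓ (s i * w * s i') = ℓ w) :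
    BruhatLE cs x (s i * w * s i') ∨ BruhatLE cs (s i * x * s i') (s i * w * s i') := by
  have hinv (y : W) : s i' * y⁻¹ * s i = (s i * y * s i')⁻¹ := by simp [mul_assoc, inv_simple]
  rcases lt_or_gt_of_ne (cs.length_simple_mul_ne w i) with hw | hw
  · exact h.le_or_simple_mul_mul_simple_le_of_length_simple_mul_lt hlen hw
  rcases lt_or_gt_of_ne (cs.length_mul_simple_ne w i') with hw' | hw'
  · -- a right descent of `w` is a left descent of `w⁻¹`
    have hw'' : ℓ (s i' * w⁻¹) < ℓ w⁻¹ := by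
      rwa [← cs.inv_simple i', ← mul_inv_rev, length_inv, length_inv]
    have hlen' : ℓ (s i' * w⁻¹ * s i) = ℓ w⁻¹ := by rw [hinv, length_inv, length_inv, hlen]
    rcases h.inv.le_or_simple_mul_mul_simple_le_of_length_simple_mul_lt hlen' hw'' with h' | h'
    · exact Or.inl (by simpa [hinv] using h'.inv)
    · exact Or.inr (by simpa [hinv] using h'.inv)
  · rw [cs.simple_mul_mul_simple_eq_self hw hw' hlen]
    exact Or.inl h

end BruhatLE

theorem bruhatLE_simple_mul_mul_simple {w : W} {i i' : B} (h : ℓ (s i * w * s i') < ℓ w) :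
    BruhatLE cs (s i * w * s i') w := by
  have := cs.length_simple_mul w i
  have := cs.length_mul_simple (s i * w) i'
  obtain ⟨τ, hτ, hτπ⟩ := cs.exists_isReduced (s i * w * s i')
  have hτπ' : π (τ ++ [i']) = s i * w := by
    rw [wordProd_append, wordProd_singleton, ← hτπ, simple_mul_simple_cancel_right]
  have hτ' : cs.IsReduced (τ ++ [i']) :=
    hτ.concat (by rw [← hτπ, simple_mul_simple_cancel_right]; omega)
  have hiτ : cs.IsReduced (i :: (τ ++ [i'])) :=
    hτ'.cons (by rw [hτπ', simple_mul_simple_cancel_left]; omega)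
  exact ⟨_, hiτ, by rw [wordProd_cons, hτπ', simple_mul_simple_cancel_left],
    τ, (List.sublist_append_left τ [i']).cons i, hτπ.symm⟩

theorem length_le_length_simple_mul_mul_simple {a : W} {i i' : B} (hc : s i * a * s i' ∈ 𝒪)
    (hmin : ∀ v ∈ 𝒪, BruhatLE cs v a → v = a) : ℓ a ≤ ℓ (s i * a * s i') := by
  by_contra! h
  exact h.ne (congrArg _ (hmin _ hc (bruhatLE_simple_mul_mul_simple h)))

theorem bruhat_minimal_simple_mul_mul_simple {a : W} {i i' : B}
    (h𝒪 : ∀ v ∈ 𝒪, s i * v * s i' ∈ 𝒪) (hmin : ∀ v ∈ 𝒪, BruhatLE cs v a → v = a)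
    (hlen : ℓ (s i * a * s i') = ℓ a) :
    ∀ v ∈ 𝒪, BruhatLE cs v (s i * a * s i') → v = s i * a * s i' := by
  have hback : s i * (s i * a * s i') * s i' = a := by
    simp [mul_assoc, simple_mul_simple_cancel_left]
  intro v hv hle
  rcases hle.le_or_simple_mul_mul_simple_le (by rw [hback, hlen]) with h | h <;> rw [hback] at h
  · obtain rfl := hmin v hv h
    exact hle.eq_of_length_le hlen.le
  · rw [← hmin _ (h𝒪 v hv) h]
    simp [mul_assoc, simple_mul_simple_cancel_left]

theorem length_eq_of_reflTransGen_twistedStep {J : Set B} {δ : W →* W}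
    (hδ : ∀ i ∈ J, ∃ i', δ (s i) = s i') (h𝒪 : ∀ i ∈ J, ∀ w ∈ 𝒪, s i * w * (δ (s i))⁻¹ ∈ 𝒪)
    {x y : W} (hxy : Relation.ReflTransGen (TwistedStep cs J δ) x y) (hx : x ∈ 𝒪)
    (hmin : ∀ v ∈ 𝒪, BruhatLE cs v x → v = x) : ℓ x = ℓ y := by
  induction hxy using Relation.ReflTransGen.head_induction_on with
  | refl => rfl
  | head hstep _ ih =>
    obtain ⟨i, hi, rfl, hle⟩ := hstep
    obtain ⟨i', hi'⟩ := hδ i hi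
    have h𝒪i : ∀ v ∈ 𝒪, s i * v * s i' ∈ 𝒪 := by simpa [hi', inv_simple] using h𝒪 i hi
    rw [hi', inv_simple] at hle ih
    have hlen := le_antisymm hle (length_le_length_simple_mul_mul_simple (h𝒪i _ hx) hmin)
    rw [← ih (h𝒪i _ hx) (bruhat_minimal_simple_mul_mul_simple h𝒪i hmin hlen), hlen]

end BruhatOrder

/-- Let `𝒪` be a `δ`-twisted `W_J`-conjugacy class in `W` (the orbit of some
element under `u · w = u w δ(u)⁻¹` for `u ∈ W_J`) satisfying the Red-Min property: from
every element of `𝒪` there is a chain of length-nonincreasing twisted conjugations by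
simple reflections in `J` reaching a minimal length element of `𝒪`. Then the minimal
length elements of `𝒪` are exactly the minimal elements of `𝒪` for the Bruhat order. -/
theorem min_length_eq_bruhat_min (cs : CoxeterSystem M W) (J : Set B) (δ : W ≃* W)
    (hδ : ∀ i ∈ J, ∃ i' ∈ J, δ (cs.simple i) = cs.simple i')
    (𝒪 : Set W) (w₀ : W)
    (h𝒪 : 𝒪 = {w | ∃ u ∈ Subgroup.closure (cs.simple '' J), w = u * w₀ * (δ u)⁻¹})
    (hRM : ∀ w ∈ 𝒪, ∃ w', Relation.ReflTransGen (TwistedStep cs J (δ : W →* W)) w w' ∧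
      ∀ v ∈ 𝒪, cs.length w' ≤ cs.length v) :
    {w ∈ 𝒪 | ∀ v ∈ 𝒪, cs.length w ≤ cs.length v} =
      {w ∈ 𝒪 | ∀ v ∈ 𝒪, BruhatLE cs v w → v = w} := by
  have h𝒪J : ∀ i ∈ J, ∀ w ∈ 𝒪, cs.simple i * w * ((δ : W →* W) (cs.simple i))⁻¹ ∈ 𝒪 := by
    intro i hi w hw
    rw [h𝒪] at hw ⊢
    obtain ⟨u, hu, rfl⟩ := hw
    exact ⟨cs.simple i * u, mul_mem (Subgroup.subset_closure ⟨i, hi, rfl⟩) hu, by simp [mul_assoc]⟩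
  ext w
  refine ⟨fun ⟨hw, hmin⟩ => ⟨hw, fun v hv hle => hle.eq_of_length_le (hmin v hv)⟩,
    fun ⟨hw, hmin⟩ => ⟨hw, fun v hv => ?_⟩⟩
  obtain ⟨w', hww', hw'⟩ := hRM w hw
  rw [length_eq_of_reflTransGen_twistedStep (fun i hi => (hδ i hi).imp fun _ h => h.2) h𝒪J
    hww' hw hmin]
  exact hw' v hv
end

section
/- Let W̃ be an extended affine Weyl group with automorphism δ, and let 𝒪 be a straight δ-twisted conjugacy class (one containing a δ-straight element). Then the set of minimal length elements of 𝒪 equals the set of δ-straight elements of 𝒪. -/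
open scoped Classical

variable (X : Type*) [AddCommGroup X] (W₀ : Type*) [Group W₀] [DistribMulAction W₀ X]

/-- Multiplication in the extended affine Weyl group `W̃ = X ⋊ W₀`, whose elements are
pairs `(λ, u)` representing `t^λ u`. -/
def eawMul (a b : X × W₀) : X × W₀ := (a.1 + a.2 • b.1, a.2 * b.2)

/-- Inversion in `W̃ = X ⋊ W₀`. -/
def eawInv (a : X × W₀) : X × W₀ := (-(a.2⁻¹ • a.1), a.2⁻¹)

/-- The finite root `w⁻¹(α)`, i.e. `α` composed with the action of `u`. -/
def rootComp (u : W₀) (α : X →+ ℤ) : X →+ ℤ :=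
  α.comp (DistribMulAction.toAddMonoidHom X u)

/-- The Iwahori–Matsumoto length of `t^λ u ∈ W̃`. -/
noncomputable def lenIM (Rplus : Finset (X →+ ℤ)) (w : X × W₀) : ℤ :=
  ∑ α ∈ Rplus, if rootComp X W₀ w.2 α ∈ Rplus then |α w.1| else |α w.1 - 1|

/-- The twisted power `(wδ)^n = w δ(w) ⋯ δ^{n-1}(w)` (as an element of `W̃`). -/
def twistedPow (δ : X × W₀ → X × W₀) (w : X × W₀) : ℕ → X × W₀
  | 0 => (0, 1)
  | n + 1 => eawMul X W₀ w (δ (twistedPow δ w n))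

/-- `w` is `δ`-straight: `ℓ(w δ(w) ⋯ δ^{n-1}(w)) = n ℓ(w)` for all `n`. -/
def IsStraight (Rplus : Finset (X →+ ℤ)) (δ : X × W₀ → X × W₀) (w : X × W₀) : Prop :=
  ∀ n : ℕ, lenIM X W₀ Rplus (twistedPow X W₀ δ w n) = n * lenIM X W₀ Rplus w

/-!
The Iwahori–Matsumoto length is a `δ`-invariant group seminorm on `W̃ = X ⋊ W₀`: subadditivity
comes from the triangle inequality summand by summand, after reindexing the positive roots by
`α ↦ ±w⁻¹α`, which permutes them. If `v = z w δ(z)⁻¹` then `(vδ)ⁿ = z (wδ)ⁿ δⁿ(z)⁻¹`, so the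
lengths of the twisted powers of two elements of one class differ by a constant independent of
`n`. For straight `w` this gives `n ℓ(w) ≤ n ℓ(v) + C` for all `n`, hence `ℓ(w) ≤ ℓ(v)`. If moreover
`ℓ(v) = ℓ(w)`, then `k n ℓ(v) ≤ ℓ((vδ)^{kn}) + C ≤ k ℓ((vδ)ⁿ) + C` for all `k`, so
`ℓ((vδ)ⁿ) = n ℓ(v)`, i.e. `v` is straight as well.
-/

lemma le_of_forall_nat_mul_le_mul_add {a b C : ℝ} (h : ∀ k : ℕ, k * a ≤ k * b + C) : a ≤ b := by
  by_contra! hlt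
  obtain ⟨k, hk⟩ := exists_nat_gt (C / (a - b))
  rw [div_lt_iff₀ (sub_pos.2 hlt)] at hk
  linarith [h k]

namespace MonoidHom

variable {G : Type*} [Group G] (δ : G →* G)

/-- `w δ(w) ⋯ δⁿ⁻¹(w) = (wδ)ⁿ δ⁻ⁿ`. -/
def twistedPow (w : G) : ℕ → G
  | 0 => 1
  | n + 1 => w * δ (twistedPow w n)

def IsTwistedConj (a b : G) : Prop := ∃ x, b = x * a * (δ x)⁻¹

def IsStraight (p : GroupSeminorm G) (w : G) : Prop :=
  ∀ n : ℕ, p (δ.twistedPow w n) = n * p w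

variable {δ}

@[simp]
lemma twistedPow_zero (w : G) : δ.twistedPow w 0 = 1 := rfl

lemma twistedPow_succ (w : G) (n : ℕ) : δ.twistedPow w (n + 1) = w * δ (δ.twistedPow w n) := rfl

@[simp]
lemma twistedPow_one (w : G) : δ.twistedPow w 1 = w := by
  simp [twistedPow_succ]

lemma twistedPow_add (w : G) (m n : ℕ) :
    δ.twistedPow w (m + n) = δ.twistedPow w m * δ^[m] (δ.twistedPow w n) := by
  induction m with
  | zero => simp
  | succ m ih =>
    rw [Nat.add_right_comm, twistedPow_succ, ih, map_mul, twistedPow_succ,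
      Function.iterate_succ_apply', mul_assoc]

lemma twistedPow_twistedConj (x w : G) (n : ℕ) :
    δ.twistedPow (x * w * (δ x)⁻¹) n = x * δ.twistedPow w n * (δ^[n] x)⁻¹ := by
  induction n with
  | zero => simp
  | succ n ih =>
    rw [twistedPow_succ, ih, twistedPow_succ, Function.iterate_succ_apply']
    simp only [map_mul, map_inv, mul_assoc, inv_mul_cancel_left]

lemma IsTwistedConj.symm {a b : G} (h : δ.IsTwistedConj a b) : δ.IsTwistedConj b a := by
  obtain ⟨x, rfl⟩ := h
  exact ⟨x⁻¹, by simp [mul_assoc]⟩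

lemma IsTwistedConj.trans {a b c : G} (hab : δ.IsTwistedConj a b) (hbc : δ.IsTwistedConj b c) :
    δ.IsTwistedConj a c := by
  obtain ⟨x, rfl⟩ := hab
  obtain ⟨y, rfl⟩ := hbc
  exact ⟨y * x, by simp only [map_mul, mul_inv_rev, mul_assoc]⟩

variable {p : GroupSeminorm G} (hδ : ∀ a, p (δ a) = p a)
include hδ

lemma seminorm_iterate (n : ℕ) (a : G) : p (δ^[n] a) = p a := by
  induction n with
  | zero => rfl
  | succ n ih => rw [Function.iterate_succ_apply', hδ, ih]

lemma seminorm_twistedPow_add_le (w : G) (m n : ℕ) :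
    p (δ.twistedPow w (m + n)) ≤ p (δ.twistedPow w m) + p (δ.twistedPow w n) := by
  rw [twistedPow_add, ← seminorm_iterate hδ m (δ.twistedPow w n)]
  exact map_mul_le_add p _ _

lemma seminorm_twistedPow_mul_le (w : G) (k n : ℕ) :
    p (δ.twistedPow w (k * n)) ≤ k * p (δ.twistedPow w n) := by
  induction k with
  | zero => simp
  | succ k ih =>
    rw [Nat.succ_mul]
    push_cast
    linarith [seminorm_twistedPow_add_le hδ w (k * n) n]

lemma seminorm_twistedPow_le (w : G) (n : ℕ) : p (δ.twistedPow w n) ≤ n * p w := by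
  simpa using seminorm_twistedPow_mul_le hδ w n 1

lemma IsTwistedConj.exists_seminorm_twistedPow_le {a b : G} (h : δ.IsTwistedConj a b) :
    ∃ C, ∀ n, p (δ.twistedPow b n) ≤ p (δ.twistedPow a n) + C := by
  obtain ⟨x, rfl⟩ := h
  refine ⟨2 * p x, fun n => ?_⟩
  rw [twistedPow_twistedConj]
  calc p (x * δ.twistedPow a n * (δ^[n] x)⁻¹)
      ≤ p x + p (δ.twistedPow a n) + p (δ^[n] x)⁻¹ :=
        (map_mul_le_add p _ _).trans (add_le_add_left (map_mul_le_add p _ _) _)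
    _ = p (δ.twistedPow a n) + 2 * p x := by rw [map_inv_eq_map, seminorm_iterate hδ]; ring

lemma IsStraight.le_of_isTwistedConj {w v : G} (hw : δ.IsStraight p w)
    (hwv : δ.IsTwistedConj w v) : p w ≤ p v := by
  obtain ⟨C, hC⟩ := hwv.symm.exists_seminorm_twistedPow_le hδ
  refine le_of_forall_nat_mul_le_mul_add (C := C) fun n => ?_
  rw [← hw n]
  linarith [hC n, seminorm_twistedPow_le hδ v n]

lemma IsStraight.of_isTwistedConj_of_le {w v : G} (hw : δ.IsStraight p w)
    (hwv : δ.IsTwistedConj w v) (hvw : p v ≤ p w) : δ.IsStraight p v := by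
  have hpv : p v = p w := hvw.antisymm (hw.le_of_isTwistedConj hδ hwv)
  obtain ⟨C, hC⟩ := hwv.symm.exists_seminorm_twistedPow_le hδ
  refine fun n => (seminorm_twistedPow_le hδ v n).antisymm
    (le_of_forall_nat_mul_le_mul_add (C := C) fun k => ?_)
  have hkn := hw (k * n)
  push_cast at hkn
  rw [← mul_assoc, hpv, ← hkn]
  linarith [hC (k * n), seminorm_twistedPow_mul_le hδ v k n]

end MonoidHom

section GroupLaw

variable {X W₀}

lemma eawMul_assoc (a b c : X × W₀) :
    eawMul X W₀ (eawMul X W₀ a b) c = eawMul X W₀ a (eawMul X W₀ b c) := by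
  simp [eawMul, mul_smul, add_assoc, mul_assoc]

lemma one_eawMul (a : X × W₀) : eawMul X W₀ (0, 1) a = a := by
  simp [eawMul]

lemma eawInv_eawMul (a : X × W₀) : eawMul X W₀ (eawInv X W₀ a) a = (0, 1) := by
  simp [eawMul, eawInv]

end GroupLaw

def ExtAffWeyl : Type _ := X × W₀

namespace ExtAffWeyl

variable {X W₀}

instance : Mul (ExtAffWeyl X W₀) := ⟨eawMul X W₀⟩

instance : Inv (ExtAffWeyl X W₀) := ⟨eawInv X W₀⟩

instance : One (ExtAffWeyl X W₀) := ⟨((0 : X), (1 : W₀))⟩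

instance : Group (ExtAffWeyl X W₀) :=
  Group.ofLeftAxioms eawMul_assoc one_eawMul eawInv_eawMul

omit [DistribMulAction W₀ X] in
lemma one_def : (1 : ExtAffWeyl X W₀) = ((0, 1) : X × W₀) := rfl

lemma mul_def (a b : ExtAffWeyl X W₀) : a * b = eawMul X W₀ a b := rfl

lemma inv_def (a : ExtAffWeyl X W₀) : a⁻¹ = eawInv X W₀ a := rfl

end ExtAffWeyl

section Length

variable {X W₀}

lemma rootComp_one (α : X →+ ℤ) : rootComp X W₀ 1 α = α := by
  ext; simp [rootComp]

lemma rootComp_mul (u v : W₀) (α : X →+ ℤ) :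
    rootComp X W₀ (u * v) α = rootComp X W₀ v (rootComp X W₀ u α) := by
  ext; simp [rootComp, mul_smul]

lemma rootComp_neg (u : W₀) (α : X →+ ℤ) : rootComp X W₀ u (-α) = -rootComp X W₀ u α := by
  ext; simp [rootComp]

lemma rootComp_inv_rootComp (u : W₀) (α : X →+ ℤ) :
    rootComp X W₀ u⁻¹ (rootComp X W₀ u α) = α := by
  rw [← rootComp_mul, mul_inv_cancel, rootComp_one]

lemma rootComp_rootComp_inv (u : W₀) (α : X →+ ℤ) :
    rootComp X W₀ u (rootComp X W₀ u⁻¹ α) = α := by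
  simpa using rootComp_inv_rootComp u⁻¹ α

lemma rootComp_injective (u : W₀) : Function.Injective (rootComp X W₀ u) :=
  Function.LeftInverse.injective (g := rootComp X W₀ u⁻¹) (rootComp_inv_rootComp u)

variable (Rplus : Finset (X →+ ℤ))

noncomputable def lenTerm (a : X × W₀) (α : X →+ ℤ) : ℤ :=
  if rootComp X W₀ a.2 α ∈ Rplus then |α a.1| else |α a.1 - 1|

noncomputable def posRootComp (u : W₀) (α : X →+ ℤ) : X →+ ℤ :=
  if rootComp X W₀ u α ∈ Rplus then rootComp X W₀ u α else -rootComp X W₀ u α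

variable {Rplus}

lemma lenIM_eq_sum_lenTerm (a : X × W₀) :
    lenIM X W₀ Rplus a = ∑ α ∈ Rplus, lenTerm Rplus a α := rfl

lemma lenIM_one : lenIM X W₀ Rplus (0, 1) = 0 :=
  Finset.sum_eq_zero fun α hα => by simp [rootComp_one, hα]

variable (hdisj : ∀ α ∈ Rplus, -α ∉ Rplus)
variable (hstab : ∀ u : W₀, ∀ α ∈ Rplus,
    rootComp X W₀ u α ∈ Rplus ∨ -(rootComp X W₀ u α) ∈ Rplus)

include hstab in
lemma posRootComp_mem (u : W₀) {α : X →+ ℤ} (hα : α ∈ Rplus) : posRootComp Rplus u α ∈ Rplus := by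
  unfold posRootComp
  split_ifs with h
  · exact h
  · exact (hstab u α hα).resolve_left h

include hdisj in
lemma posRootComp_injOn (u : W₀) : Set.InjOn (posRootComp Rplus u) Rplus := by
  intro α hα β hβ h
  unfold posRootComp at h
  split_ifs at h with h1 h2 h2
  · exact rootComp_injective u h
  · rw [← rootComp_neg] at h
    exact absurd (rootComp_injective u h ▸ hα) (hdisj β hβ)
  · rw [← rootComp_neg] at h
    exact absurd ((rootComp_injective u h).symm ▸ hβ) (hdisj α hα)
  · exact rootComp_injective u (neg_injective h)

include hdisj hstab in
lemma sum_comp_posRootComp (u : W₀) (f : (X →+ ℤ) → ℤ) :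
    ∑ α ∈ Rplus, f (posRootComp Rplus u α) = ∑ β ∈ Rplus, f β :=
  Finset.sum_nbij _ (fun _ => posRootComp_mem hstab u) (posRootComp_injOn hdisj u)
    (Finset.surjOn_of_injOn_of_card_le _ (fun _ => posRootComp_mem hstab u)
      (posRootComp_injOn hdisj u) le_rfl) fun _ _ => rfl

include hdisj hstab in
lemma lenTerm_eawMul_le (a b : X × W₀) {α : X →+ ℤ} (hα : α ∈ Rplus) :
    lenTerm Rplus (eawMul X W₀ a b) α ≤
      lenTerm Rplus a α + lenTerm Rplus b (posRootComp Rplus a.2 α) := by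
  obtain ⟨lam, u⟩ := a
  obtain ⟨mu, v⟩ := b
  have hval : α (lam + u • mu) = α lam + rootComp X W₀ u α mu := map_add α _ _
  by_cases h1 : rootComp X W₀ u α ∈ Rplus
  · simp only [lenTerm, eawMul, hval, rootComp_mul, posRootComp, if_pos h1]
    split_ifs <;> grind
  · have hneg : -rootComp X W₀ u α ∈ Rplus := (hstab u α hα).resolve_left h1
    have hiff : rootComp X W₀ v (rootComp X W₀ u α) ∈ Rplus ↔
        -rootComp X W₀ v (rootComp X W₀ u α) ∉ Rplus := by
      have h := hstab v _ hneg
      rw [rootComp_neg, neg_neg] at h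
      exact ⟨fun h' h'' => hdisj _ h' h'', h.resolve_left⟩
    simp only [lenTerm, eawMul, hval, rootComp_mul, posRootComp, if_neg h1, rootComp_neg,
      AddMonoidHom.neg_apply]
    split_ifs <;> grind

include hdisj in
lemma lenTerm_eawInv (a : X × W₀) {α : X →+ ℤ} (hα : α ∈ Rplus) :
    lenTerm Rplus (eawInv X W₀ a) α = lenTerm Rplus a (posRootComp Rplus a.2⁻¹ α) := by
  obtain ⟨lam, u⟩ := a
  have hval : α (-(u⁻¹ • lam)) = -rootComp X W₀ u⁻¹ α lam := map_neg α _
  by_cases h1 : rootComp X W₀ u⁻¹ α ∈ Rplus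
  · simp only [lenTerm, eawInv, hval, posRootComp, if_pos h1, rootComp_rootComp_inv, if_pos hα,
      abs_neg]
  · simp only [lenTerm, eawInv, hval, posRootComp, if_neg h1, rootComp_neg,
      rootComp_rootComp_inv, if_neg (hdisj α hα), AddMonoidHom.neg_apply]

include hdisj hstab in
lemma lenIM_eawMul_le (a b : X × W₀) :
    lenIM X W₀ Rplus (eawMul X W₀ a b) ≤ lenIM X W₀ Rplus a + lenIM X W₀ Rplus b :=
  calc lenIM X W₀ Rplus (eawMul X W₀ a b)
      ≤ ∑ α ∈ Rplus, (lenTerm Rplus a α + lenTerm Rplus b (posRootComp Rplus a.2 α)) :=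
        Finset.sum_le_sum fun _ hα => lenTerm_eawMul_le hdisj hstab a b hα
    _ = lenIM X W₀ Rplus a + lenIM X W₀ Rplus b := by
        rw [Finset.sum_add_distrib, sum_comp_posRootComp hdisj hstab]; rfl

include hdisj hstab in
lemma lenIM_eawInv (a : X × W₀) : lenIM X W₀ Rplus (eawInv X W₀ a) = lenIM X W₀ Rplus a := by
  rw [lenIM_eq_sum_lenTerm, Finset.sum_congr rfl fun _ hα => lenTerm_eawInv hdisj a hα,
    sum_comp_posRootComp hdisj hstab, lenIM_eq_sum_lenTerm]

end Length

namespace ExtAffWeyl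

variable {X W₀} {Rplus : Finset (X →+ ℤ)} {δ : X × W₀ → X × W₀}
variable (hdisj : ∀ α ∈ Rplus, -α ∉ Rplus)
variable (hstab : ∀ u : W₀, ∀ α ∈ Rplus,
    rootComp X W₀ u α ∈ Rplus ∨ -(rootComp X W₀ u α) ∈ Rplus)
variable (hδmul : ∀ a b, δ (eawMul X W₀ a b) = eawMul X W₀ (δ a) (δ b))

noncomputable def lenIMSeminorm : GroupSeminorm (ExtAffWeyl X W₀) where
  toFun a := lenIM X W₀ Rplus a
  map_one' := by rw [one_def, lenIM_one, Int.cast_zero]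
  mul_le' a b := by rw [mul_def]; exact_mod_cast lenIM_eawMul_le hdisj hstab a b
  inv' a := by rw [inv_def]; exact congrArg Int.cast (lenIM_eawInv hdisj hstab a)

lemma lenIMSeminorm_le_iff (a b : ExtAffWeyl X W₀) :
    lenIMSeminorm hdisj hstab a ≤ lenIMSeminorm hdisj hstab b ↔
      lenIM X W₀ Rplus a ≤ lenIM X W₀ Rplus b :=
  Int.cast_le

def homOfMul : ExtAffWeyl X W₀ →* ExtAffWeyl X W₀ :=
  MonoidHom.mk' δ hδmul

lemma twistedPow_eq_homOfMul_twistedPow (w : X × W₀) (n : ℕ) :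
    twistedPow X W₀ δ w n = (homOfMul hδmul).twistedPow w n := by
  induction n with
  | zero => rfl
  | succ n ih => rw [twistedPow, ih]; rfl

lemma isStraight_iff (w : ExtAffWeyl X W₀) :
    IsStraight X W₀ Rplus δ w ↔ (homOfMul hδmul).IsStraight (lenIMSeminorm hdisj hstab) w := by
  refine forall_congr' fun n => ?_
  rw [twistedPow_eq_homOfMul_twistedPow hδmul w n, ← Int.cast_inj (α := ℝ), Int.cast_mul,
    Int.cast_natCast]
  rfl

end ExtAffWeyl

/-- Let `𝒪` be a straight `δ`-twisted conjugacy class of the extended affine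
Weyl group `W̃ = X ⋊ W₀` (an orbit of `x · w = x w δ(x)⁻¹` containing a `δ`-straight
element). Then the set of minimal length elements of `𝒪` equals the set of `δ`-straight
elements of `𝒪`. -/
theorem straight_class_min_eq_straight
    (Rplus : Finset (X →+ ℤ))
    (hdisj : ∀ α ∈ Rplus, -α ∉ Rplus)
    (hstab : ∀ u : W₀, ∀ α ∈ Rplus,
      rootComp X W₀ u α ∈ Rplus ∨ -(rootComp X W₀ u α) ∈ Rplus)
    (δ : X × W₀ → X × W₀)
    (hδmul : ∀ a b, δ (eawMul X W₀ a b) = eawMul X W₀ (δ a) (δ b))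
    (hδlen : ∀ a, lenIM X W₀ Rplus (δ a) = lenIM X W₀ Rplus a)
    (𝒪 : Set (X × W₀)) (w₀ : X × W₀)
    (h𝒪 : 𝒪 = {w | ∃ x : X × W₀, w = eawMul X W₀ (eawMul X W₀ x w₀) (eawInv X W₀ (δ x))})
    (hstraight : ∃ w ∈ 𝒪, IsStraight X W₀ Rplus δ w) :
    {w ∈ 𝒪 | ∀ v ∈ 𝒪, lenIM X W₀ Rplus w ≤ lenIM X W₀ Rplus v} =
      {w ∈ 𝒪 | IsStraight X W₀ Rplus δ w} := by
  have hδ (a : ExtAffWeyl X W₀) :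
      ExtAffWeyl.lenIMSeminorm hdisj hstab (ExtAffWeyl.homOfMul hδmul a) =
        ExtAffWeyl.lenIMSeminorm hdisj hstab a :=
    congrArg Int.cast (hδlen a)
  have hconj {v v' : X × W₀} (hv : v ∈ 𝒪) (hv' : v' ∈ 𝒪) :
      (ExtAffWeyl.homOfMul hδmul).IsTwistedConj v v' := by
    subst h𝒪
    exact MonoidHom.IsTwistedConj.trans (MonoidHom.IsTwistedConj.symm hv) hv'
  obtain ⟨w, hw, hw_straight⟩ := hstraight
  rw [ExtAffWeyl.isStraight_iff hdisj hstab hδmul w] at hw_straight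
  ext v
  refine and_congr_right fun hv => ?_
  rw [ExtAffWeyl.isStraight_iff hdisj hstab hδmul v]
  constructor
  · intro hv_min
    exact hw_straight.of_isTwistedConj_of_le hδ (hconj hw hv)
      ((ExtAffWeyl.lenIMSeminorm_le_iff hdisj hstab v w).2 (hv_min w hw))
  · intro hv_straight u hu
    exact (ExtAffWeyl.lenIMSeminorm_le_iff hdisj hstab v u).1
      (hv_straight.le_of_isTwistedConj hδ (hconj hv hu))
end

section
/- In the generic Hecke algebra ℋ of a Coxeter system (W,S) over Λ = ℤ[c(s)], if w, w' ∈ W satisfy w' = s w s for some s ∈ S with ℓ(w) = ℓ(w') and s w < w, then T_w − T_{w'} lies in the commutator subspace [ℋ, ℋ]. -/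
open CoxeterSystem

variable {B : Type*} {W : Type*} [Group W] {M : CoxeterMatrix B}

/-- The `Λ`-submodule of commutators `[ℋ, ℋ]` of an algebra `ℋ`. -/
def commutatorSpan (Λ : Type*) [CommRing Λ] (H : Type*) [Ring H] [Algebra Λ H] :
    Submodule Λ H :=
  Submodule.span Λ {x : H | ∃ a b : H, x = a * b - b * a}

/-- In the generic Hecke algebra `ℋ` of a Coxeter system `(W,S)` (a
`Λ`-algebra with basis `T_w` satisfying `T_w T_{w'} = T_{ww'}` when lengths add and the
quadratic relations `(T_s + 1)(T_s − c(s)) = 0`), if `w' = s w s` for a simple reflection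
`s` with `ℓ(w) = ℓ(w')` and `s w < w`, then `T_w − T_{w'} ∈ [ℋ, ℋ]`. -/
theorem Tw_sub_Tw'_mem_commutator (cs : CoxeterSystem M W)
    (Λ : Type*) [CommRing Λ] (c : B → Λ)
    (hc : ∀ i i' : B, IsConj (cs.simple i) (cs.simple i') → c i = c i')
    (H : Type*) [Ring H] [Algebra Λ H] (T : W → H)
    (hT1 : T 1 = 1)
    (hmul : ∀ w w' : W, cs.length (w * w') = cs.length w + cs.length w' →
      T (w * w') = T w * T w')
    (hquad : ∀ i : B, (T (cs.simple i) + 1) *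
      (T (cs.simple i) - algebraMap Λ H (c i)) = 0)
    (i : B) (w w' : W)
    (hw' : w' = cs.simple i * w * cs.simple i)
    (hlen : cs.length w = cs.length w')
    (hsw : cs.length (cs.simple i * w) < cs.length w) :
    T w - T w' ∈ commutatorSpan Λ H := by
  have hvlen : cs.length (cs.simple i * w) + 1 = cs.length w := by
    rcases cs.length_simple_mul w i with h | h
    · omega
    · exact h
  set v := cs.simple i * w with hv
  have hwv : w = cs.simple i * v := by
    rw [hv, ← mul_assoc, cs.simple_mul_simple_self i, one_mul]
  have hTw : T w = T (cs.simple i) * T v := by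
    rw [hwv]
    exact hmul _ _ (by rw [← hwv, cs.length_simple]; omega)
  have hw'v : w' = v * cs.simple i := by rw [hw', hv]
  have hTw' : T w' = T v * T (cs.simple i) := by
    rw [hw'v]
    refine hmul _ _ ?_
    rw [← hw'v, ← hlen, cs.length_simple]; omega
  rw [hTw, hTw']
  exact Submodule.subset_span ⟨T (cs.simple i), T v, rfl⟩
end

section
/- Let (W,S) be a Coxeter system in which every conjugacy class satisfies the Red-Min property (for each w not of minimal length in its class, there is w' with w ≈ w' and s ∈ S with ℓ(s w' s) < ℓ(w')), where ≈ denotes equality-length chains of conjugations by simple reflections. Then in the generic Hecke algebra ℋ, the image of T_w in the cocenter ℋ/[ℋ,ℋ] lies in the Λ-span of the images of T_x for x of minimal length in their conjugacy classes. -/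
/-
Induction on `ℓ(w)`. Modulo commutators, `T` is constant along `≈`: if `s` is a descent of `u` on
exactly one side, then `T_u` and `T_{sus}` are the two products of `T_s` with `T_{su}` (or with
`T_{us}`); if `s` is an ascent on both sides, then `ℓ(sus) = ℓ(u)` forces `sus = u`. If `w` is not
of minimal length, Red-Min gives `w ≈ w'` and `s` with `ℓ(sw's) < ℓ(w')`, and the quadratic
relation turns `T_{w'} ≡ T_{sw'} T_s = T_{sw's} T_s²` into `(c - 1) T_{sw'} + c T_{sw's}`, a
combination of shorter elements.

The fact `sus = u` is a case of the exchange condition. It comes from the action of `W` on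
`W × {±1}` in which `s_i` acts by `(t, ε) ↦ (s_i t s_i, ±ε)`, the sign flipping iff `t = s_i`:
`π ω` sends `(t, 1)` to a sign recording the parity of the occurrences of `t` in the right
inversion sequence of `ω`, so all reduced words of an element have the same right inversions.
-/

open CoxeterSystem

variable {B : Type*} {W : Type*} [Group W] {M : CoxeterMatrix B}

/-- One length-preserving conjugation step by a simple reflection: `w ↦ s w s` with
`ℓ(s w s) = ℓ(w)`. -/
def ApproxStep (cs : CoxeterSystem M W) (w w' : W) : Prop :=
  ∃ i : B, w' = cs.simple i * w * cs.simple i ∧ cs.length w' = cs.length w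

/-- The relation `≈`: a chain of length-preserving conjugations by simple reflections. -/
def Approx (cs : CoxeterSystem M W) : W → W → Prop :=
  Relation.ReflTransGen (ApproxStep cs)

/-- `w` has minimal length in its conjugacy class. -/
def IsMinInClass (cs : CoxeterSystem M W) (w : W) : Prop :=
  ∀ v : W, IsConj w v → cs.length w ≤ cs.length v

section SignedConjugation

variable {G : Type*}

open Classical in
noncomputable def signAt (t u : G) : ℤˣ := if t = u then -1 else 1

theorem prod_map_signAt_eq_neg_one_iff {l : List G} (hl : l.Nodup) (t : G) :
    (l.map (signAt t)).prod = -1 ↔ t ∈ l := by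
  classical
  have prod_eq_one {l' : List G} (ht : t ∉ l') : (l'.map (signAt t)).prod = 1 :=
    List.prod_eq_one fun x hx => by
      obtain ⟨u, hu, rfl⟩ := List.mem_map.mp hx
      exact if_neg fun (h : t = u) => ht (h ▸ hu)
  by_cases ht : t ∈ l
  · rw [((List.perm_cons_erase ht).map (signAt t)).prod_eq, List.map_cons, List.prod_cons,
      prod_eq_one hl.not_mem_erase, mul_one]
    simp [signAt, ht]
  · simp [prod_eq_one ht, ht]

variable [Group G]

noncomputable def signedConj (g : G) : Function.End (G × ℤˣ) :=
  fun x => (g * x.1 * g⁻¹, signAt x.1 g * x.2)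

theorem signAt_conj (g t u : G) : signAt (g * t * g⁻¹) u = signAt t (g⁻¹ * u * g) := by
  have : g * t * g⁻¹ = u ↔ t = g⁻¹ * u * g :=
    ⟨fun h => by rw [← h]; group, fun h => by rw [h]; group⟩
  classical
  unfold signAt
  exact if_congr this rfl rfl

theorem signedConj_mul_pow {a b : G} (ha : a * a = 1) (hb : b * b = 1) (k : ℕ) (t : G) (ε : ℤˣ) :
    ((signedConj b * signedConj a) ^ k) (t, ε) =
      ((b * a) ^ k * t * ((b * a) ^ k)⁻¹,
        (∏ r ∈ Finset.range (2 * k), signAt t ((a * b) ^ r * a)) * ε) := by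
  have ha' : a⁻¹ = a := inv_eq_of_mul_eq_one_right ha
  have hb' : b⁻¹ = b := inv_eq_of_mul_eq_one_right hb
  induction k generalizing t ε with
  | zero => simp [Function.End.one_def]
  | succ k ih =>
    rw [pow_succ]
    change ((signedConj b * signedConj a) ^ k) (signedConj b (signedConj a (t, ε))) = _
    simp only [signedConj]
    rw [ih, signAt_conj, show b * (a * t * a⁻¹) * b⁻¹ = (b * a) * t * (b * a)⁻¹ by group]
    simp_rw [signAt_conj]
    have shift (r : ℕ) : (b * a)⁻¹ * ((a * b) ^ r * a) * (b * a) = (a * b) ^ (r + 2) * a := by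
      rw [pow_succ, pow_succ']
      simp only [mul_inv_rev, ha', hb', mul_assoc]
    rw [Nat.mul_succ, Finset.prod_range_succ', Finset.prod_range_succ']
    congr 1
    · simp only [pow_succ, mul_inv_rev, mul_assoc]
    · simp only [shift, ha', zero_add, pow_zero, pow_one, one_mul, mul_assoc]

end SignedConjugation

theorem mul_self_eq_of_add_one_mul_sub_algebraMap_eq_zero {Λ H : Type*} [CommRing Λ] [Ring H]
    [Algebra Λ H] {x : H} {q : Λ} (h : (x + 1) * (x - algebraMap Λ H q) = 0) :
    x * x = (q - 1) • x + algebraMap Λ H q := by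
  have hcomm : x * algebraMap Λ H q = q • x := by rw [Algebra.smul_def, Algebra.commutes]
  rw [sub_smul, one_smul, ← hcomm, ← sub_eq_zero, ← h]
  noncomm_ring

namespace CoxeterSystem

variable (cs : CoxeterSystem M W)

theorem isLiftable_signedConj_simple : M.IsLiftable fun i => signedConj (cs.simple i) := by
  intro i j
  funext ⟨t, ε⟩
  rw [signedConj_mul_pow (cs.simple_mul_simple_self j) (cs.simple_mul_simple_self i),
    cs.simple_mul_simple_pow, two_mul, Finset.prod_range_add]
  simp only [pow_add, cs.simple_mul_simple_pow', one_mul, inv_one, mul_one, Int.units_mul_self]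
  rfl

noncomputable def signRep : W →* Function.End (W × ℤˣ) :=
  cs.lift ⟨_, cs.isLiftable_signedConj_simple⟩

theorem signRep_wordProd (ω : List B) (t : W) (ε : ℤˣ) :
    cs.signRep (cs.wordProd ω) (t, ε) =
      (cs.wordProd ω * t * (cs.wordProd ω)⁻¹, ((cs.rightInvSeq ω).map (signAt t)).prod * ε) := by
  induction ω generalizing t ε with
  | nil => simp [Function.End.one_def]
  | cons i ω ih =>
    rw [wordProd_cons, map_mul]
    change cs.signRep (cs.simple i) (cs.signRep (cs.wordProd ω) (t, ε)) = _
    rw [ih, signRep, lift_apply_simple]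
    simp only [signedConj, rightInvSeq, List.map_cons, List.prod_cons]
    rw [signAt_conj, inv_simple]
    simp only [mul_inv_rev, inv_simple, mul_assoc]

variable {cs} in
theorem IsReduced.mem_rightInvSeq_iff {ω ω' : List B} (hω : cs.IsReduced ω)
    (hω' : cs.IsReduced ω') (h : cs.wordProd ω = cs.wordProd ω') (t : W) :
    t ∈ cs.rightInvSeq ω ↔ t ∈ cs.rightInvSeq ω' := by
  have hsign := congrArg (fun x => (cs.signRep x (t, 1)).2) h
  simp only [signRep_wordProd, mul_one] at hsign
  rw [← prod_map_signAt_eq_neg_one_iff hω.nodup_rightInvSeq,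
    ← prod_map_signAt_eq_neg_one_iff hω'.nodup_rightInvSeq, hsign]

theorem simple_mem_rightInvSeq_of_isRightDescent {ω : List B} (hω : cs.IsReduced ω) {i : B}
    (hi : cs.IsRightDescent (cs.wordProd ω) i) : cs.simple i ∈ cs.rightInvSeq ω := by
  obtain ⟨ω', hω', hπ'⟩ := cs.exists_isReduced (cs.wordProd ω * cs.simple i)
  have hπ : cs.wordProd (ω'.concat i) = cs.wordProd ω := by
    rw [wordProd_concat, ← hπ', simple_mul_simple_cancel_right]
  have hred : cs.IsReduced (ω'.concat i) := by
    rw [IsReduced, hπ, List.length_concat, ← hω', ← hπ']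
    exact (cs.isRightDescent_iff.mp hi).symm
  rw [← hred.mem_rightInvSeq_iff hω hπ, rightInvSeq_concat]
  simp

theorem simple_mul_mul_simple_eq_self_of_length_eq {w : W} {i : B}
    (hl : cs.length (cs.simple i * w) = cs.length w + 1)
    (hr : cs.length (w * cs.simple i) = cs.length w + 1)
    (h : cs.length (cs.simple i * w * cs.simple i) = cs.length w) :
    cs.simple i * w * cs.simple i = w := by
  obtain ⟨ω, hω, rfl⟩ := cs.exists_isReduced w
  have hred : cs.IsReduced (i :: ω) := by
    rw [IsReduced, wordProd_cons, hl, hω.eq, List.length_cons]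
  have hdesc : cs.IsRightDescent (cs.wordProd (i :: ω)) i := by
    rw [IsRightDescent, wordProd_cons, h, hl]
    exact Nat.lt_succ_self _
  rcases List.mem_cons.mp (cs.simple_mem_rightInvSeq_of_isRightDescent hred hdesc) with h' | h'
  · calc cs.simple i * cs.wordProd ω * cs.simple i
        _ = cs.simple i * cs.wordProd ω * ((cs.wordProd ω)⁻¹ * cs.simple i * cs.wordProd ω) := by
          rw [← h']
        _ = cs.wordProd ω := by simp [mul_assoc]
  · have := (cs.isRightInversion_of_mem_rightInvSeq hω h').2
    omega

theorem length_eq_of_approx {u u' : W} (h : Approx cs u u') : cs.length u' = cs.length u := by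
  induction h with
  | refl => rfl
  | tail _ hstep ih => exact hstep.choose_spec.2.trans ih

theorem lengths_of_length_simple_conj_lt {u : W} {i : B}
    (h : cs.length (cs.simple i * u * cs.simple i) < cs.length u) :
    cs.length (cs.simple i * u * cs.simple i) + 1 = cs.length (cs.simple i * u) ∧
      cs.length (cs.simple i * u) + 1 = cs.length u := by
  rcases cs.length_simple_mul u i with hl | hl <;>
  rcases cs.length_mul_simple (cs.simple i * u) i with hr | hr <;> omega

variable {H : Type*} [Ring H] {T : W → H}

theorem exists_commutator_of_approxStep
    (hmul : ∀ w w' : W, cs.length (w * w') = cs.length w + cs.length w' →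
      T (w * w') = T w * T w')
    {u u' : W} (h : ApproxStep cs u u') : ∃ a b : H, T u' - T u = a * b - b * a := by
  obtain ⟨i, rfl, hlen⟩ := h
  rcases cs.length_mul_simple u i with hr | hr
  · rcases cs.length_simple_mul u i with hl | hl
    · refine ⟨0, 0, ?_⟩
      rw [cs.simple_mul_mul_simple_eq_self_of_length_eq hl hr hlen]
      simp
    · refine ⟨T (cs.simple i * u), T (cs.simple i), ?_⟩
      have hu : T u = T (cs.simple i) * T (cs.simple i * u) := by
        conv_lhs => rw [← cs.simple_mul_simple_cancel_left (w := u) i]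
        exact hmul _ _ (by rw [cs.simple_mul_simple_cancel_left, cs.length_simple]; omega)
      have hsus : T (cs.simple i * u * cs.simple i) = T (cs.simple i * u) * T (cs.simple i) :=
        hmul _ _ (by rw [hlen, cs.length_simple]; omega)
      rw [hu, hsus]
  · refine ⟨T (cs.simple i), T (u * cs.simple i), ?_⟩
    have hu : T u = T (u * cs.simple i) * T (cs.simple i) := by
      conv_lhs => rw [← cs.simple_mul_simple_cancel_right (w := u) i]
      exact hmul _ _ (by rw [cs.simple_mul_simple_cancel_right, cs.length_simple]; omega)
    have hsus : T (cs.simple i * u * cs.simple i) = T (cs.simple i) * T (u * cs.simple i) := by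
      rw [mul_assoc]
      exact hmul _ _ (by rw [← mul_assoc, hlen, cs.length_simple]; omega)
    rw [hu, hsus]

theorem sub_mem_of_approx (P : AddSubgroup H) (hP : ∀ a b : H, a * b - b * a ∈ P)
    (hmul : ∀ w w' : W, cs.length (w * w') = cs.length w + cs.length w' →
      T (w * w') = T w * T w')
    {u u' : W} (h : Approx cs u u') : T u' - T u ∈ P := by
  induction h with
  | refl => simp
  | tail _ hstep ih =>
    obtain ⟨a, b, hab⟩ := cs.exists_commutator_of_approxStep hmul hstep
    rw [← sub_add_sub_cancel, hab]
    exact P.add_mem (hP a b) ih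

theorem sub_mem_of_length_simple_conj_lt {Λ : Type*} [CommRing Λ] [Algebra Λ H]
    (P : Submodule Λ H) (hP : ∀ a b : H, a * b - b * a ∈ P)
    (hmul : ∀ w w' : W, cs.length (w * w') = cs.length w + cs.length w' →
      T (w * w') = T w * T w')
    {i : B} {q : Λ} (hquad : (T (cs.simple i) + 1) * (T (cs.simple i) - algebraMap Λ H q) = 0)
    {u : W} (h : cs.length (cs.simple i * u * cs.simple i) < cs.length u) :
    T u - ((q - 1) • T (cs.simple i * u) + q • T (cs.simple i * u * cs.simple i)) ∈ P := by
  obtain ⟨hsus, hsu⟩ := cs.lengths_of_length_simple_conj_lt h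
  have hu : T u = T (cs.simple i) * T (cs.simple i * u) := by
    conv_lhs => rw [← cs.simple_mul_simple_cancel_left (w := u) i]
    exact hmul _ _ (by rw [cs.simple_mul_simple_cancel_left, cs.length_simple]; omega)
  have hsu' : T (cs.simple i * u) = T (cs.simple i * u * cs.simple i) * T (cs.simple i) := by
    conv_lhs => rw [← cs.simple_mul_simple_cancel_right (w := cs.simple i * u) i]
    exact hmul _ _ (by rw [cs.simple_mul_simple_cancel_right, cs.length_simple]; omega)
  have hquad' : T (cs.simple i * u) * T (cs.simple i) =
      (q - 1) • T (cs.simple i * u) + q • T (cs.simple i * u * cs.simple i) := by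
    rw [hsu', mul_assoc, mul_self_eq_of_add_one_mul_sub_algebraMap_eq_zero hquad, mul_add,
      mul_smul_comm, Algebra.smul_def q, ← Algebra.commutes]
  rw [← hquad', hu]
  exact hP _ _

end CoxeterSystem

theorem Tw_in_span_of_minimal_general (cs : CoxeterSystem M W)
    (hRM : ∀ w : W, ¬ IsMinInClass cs w → ∃ w' : W, ∃ i : B, Approx cs w w' ∧
      cs.length (cs.simple i * w' * cs.simple i) < cs.length w')
    (Λ : Type*) [CommRing Λ] (c : B → Λ)
    (H : Type*) [Ring H] [Algebra Λ H] (T : W → H)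
    (hmul : ∀ w w' : W, cs.length (w * w') = cs.length w + cs.length w' →
      T (w * w') = T w * T w')
    (hquad : ∀ i : B, (T (cs.simple i) + 1) *
      (T (cs.simple i) - algebraMap Λ H (c i)) = 0)
    (w : W) :
    T w ∈ Submodule.span Λ
      ({x : H | ∃ a b : H, x = a * b - b * a} ∪
        {h : H | ∃ x : W, IsMinInClass cs x ∧ h = T x}) := by
  set P := Submodule.span Λ
    ({x : H | ∃ a b : H, x = a * b - b * a} ∪ {h : H | ∃ x : W, IsMinInClass cs x ∧ h = T x})
  have hP (a b : H) : a * b - b * a ∈ P := Submodule.subset_span (Or.inl ⟨a, b, rfl⟩)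
  induction hn : cs.length w using Nat.strong_induction_on generalizing w with
  | _ n ih =>
    by_cases hmin : IsMinInClass cs w
    · exact Submodule.subset_span (Or.inr ⟨w, hmin, rfl⟩)
    obtain ⟨w', i, happrox, hlt⟩ := hRM w hmin
    have hw' := cs.length_eq_of_approx happrox
    obtain ⟨hsws, hsw⟩ := cs.lengths_of_length_simple_conj_lt hlt
    have hTw' : T w' ∈ P :=
      (P.sub_mem_iff_left (P.add_mem (P.smul_mem _ (ih _ (by omega) _ rfl))
        (P.smul_mem _ (ih _ (by omega) _ rfl)))).mp
        (cs.sub_mem_of_length_simple_conj_lt P hP hmul (hquad i) hlt)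
    exact (P.sub_mem_iff_right hTw').mp (cs.sub_mem_of_approx P.toAddSubgroup hP hmul happrox)

/-- Suppose every conjugacy class of `(W,S)` satisfies the Red-Min property:
for each `w` not of minimal length in its class there are `w' ≈ w` and a simple reflection
`s` with `ℓ(s w' s) < ℓ(w')`. Then in the generic Hecke algebra `ℋ`, the image of every
`T_w` in the cocenter `ℋ/[ℋ,ℋ]` lies in the `Λ`-span of the images of the `T_x` for `x`
of minimal length in its conjugacy class; i.e., `T_w` lies in the `Λ`-span of the
commutators together with these `T_x`. -/
theorem Tw_in_span_of_minimal (cs : CoxeterSystem M W)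
    (hRM : ∀ w : W, ¬ IsMinInClass cs w → ∃ w' : W, ∃ i : B, Approx cs w w' ∧
      cs.length (cs.simple i * w' * cs.simple i) < cs.length w')
    (Λ : Type*) [CommRing Λ] (c : B → Λ)
    (hc : ∀ i i' : B, IsConj (cs.simple i) (cs.simple i') → c i = c i')
    (H : Type*) [Ring H] [Algebra Λ H] (T : W → H)
    (hT1 : T 1 = 1)
    (hmul : ∀ w w' : W, cs.length (w * w') = cs.length w + cs.length w' →
      T (w * w') = T w * T w')
    (hquad : ∀ i : B, (T (cs.simple i) + 1) *
      (T (cs.simple i) - algebraMap Λ H (c i)) = 0)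
    (w : W) :
    T w ∈ Submodule.span Λ
      ({x : H | ∃ a b : H, x = a * b - b * a} ∪
        {h : H | ∃ x : W, IsMinInClass cs x ∧ h = T x}) :=
  Tw_in_span_of_minimal_general cs hRM Λ c H T hmul hquad w
end
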